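/- For i ∈ {1,2}, let lp_i be a coherent conditional lower prevision on C_i ⊆ C(X_i) with natural extension E_i to C(X_i), and let 𝔅_i ⊆ P_∅(X_i). Then for all {i,j} = {1,2}, every gamble f on X_i, every gamble h on X_j, and every nonnegative 𝔅_i-measurable gamble g on X_i: (lp1⊗lp2)(f + g·h) = E_i( f + g·E_j(h) ), where f + g·h denotes the gamble on X1×X2 whose value at (x1,x2) is f(x_i) + g(x_i)·h(x_j), E_j(h) := E_j(h | X_j) ∈ ℝ, f + g·E_j(h) is a gamble on X_i, and (lp1⊗lp2)(·) abbreviates (lp1⊗lp2)(· | X1×X2) and E_i(·) abbreviates E_i(· | X_i). -/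

import Mathlib

open scoped BigOperators

namespace IPaper

variable {X : Type*}

/-- A gamble on `X`: a bounded real-valued function. -/
def IsGamble (f : X → ℝ) : Prop := ∃ M : ℝ, ∀ x, |f x| ≤ M

/-- The indicator gamble of an event. -/
noncomputable def ind (B : Set X) : X → ℝ := Set.indicator B 1

/-- The set `G_{>0}(X)` of nonnegative nonzero gambles. -/
def Gpos (X : Type*) : Set (X → ℝ) := {f | IsGamble f ∧ 0 ≤ f ∧ f ≠ 0}

/-- A coherent set of desirable gambles. -/
structure CoherentSDG (D : Set (X → ℝ)) : Prop where
  subset_gambles : ∀ f ∈ D, IsGamble f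
  d1 : ∀ f : X → ℝ, IsGamble f → 0 ≤ f → f ≠ 0 → f ∈ D
  d2 : ∀ f ∈ D, ∀ l : ℝ, 0 < l → l • f ∈ D
  d3 : ∀ f ∈ D, ∀ g ∈ D, f + g ∈ D
  d4 : ∀ f : X → ℝ, f ≤ 0 → f ∉ D

/-- `posi A`: positive linear hull of `A`. -/
def posi (A : Set (X → ℝ)) : Set (X → ℝ) :=
  {g | ∃ (n : ℕ) (l : Fin (n + 1) → ℝ) (h : Fin (n + 1) → X → ℝ),
    (∀ i, 0 < l i) ∧ (∀ i, h i ∈ A) ∧ g = ∑ i, l i • h i}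

/-- `E(A) := posi (A ∪ G_{>0}(X))`. -/
def natExtSet (A : Set (X → ℝ)) : Set (X → ℝ) := posi (A ∪ Gpos X)

/-- `C(X)`: all pairs of a gamble and a nonempty event. -/
def domC (X : Type*) : Set ((X → ℝ) × Set X) := {p | IsGamble p.1 ∧ p.2.Nonempty}

/-- The conditional lower prevision `lp_D` derived from a set of gambles `D`. -/
noncomputable def lpOf (D : Set (X → ℝ)) (f : X → ℝ) (B : Set X) : EReal :=
  sSup (Real.toEReal '' {m : ℝ | (fun x => (f x - m) * ind B x) ∈ D})

/-- Coherence (Williams) of a conditional lower prevision on a domain `C`. -/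
def Coherent (C : Set ((X → ℝ) × Set X)) (lp : (X → ℝ) → Set X → EReal) : Prop :=
  ∃ D : Set (X → ℝ), CoherentSDG D ∧ ∀ p ∈ C, lp p.1 p.2 = lpOf D p.1 p.2

/-- The set `A_lp`. -/
def Alp (C : Set ((X → ℝ) × Set X)) (lp : (X → ℝ) → Set X → EReal) : Set (X → ℝ) :=
  {g | ∃ p ∈ C, ∃ m : ℝ, (m : EReal) < lp p.1 p.2 ∧ g = fun x => (p.1 x - m) * ind p.2 x}

/-- `E(lp) := E(A_lp)`. -/
def ElpSet (C : Set ((X → ℝ) × Set X)) (lp : (X → ℝ) → Set X → EReal) : Set (X → ℝ) :=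
  natExtSet (Alp C lp)

/-- The natural extension of `lp` to all of `C(X)`. -/
noncomputable def natExtLP (C : Set ((X → ℝ) × Set X)) (lp : (X → ℝ) → Set X → EReal)
    (f : X → ℝ) (B : Set X) : EReal :=
  lpOf (ElpSet C lp) f B

/-- Simple `B`-measurable gamble. -/
def SimpleMeas (Bfam : Set (Set X)) (g : X → ℝ) : Prop :=
  ∃ (c0 : ℝ) (n : ℕ) (c : Fin n → ℝ) (Bs : Fin n → Set X),
    0 ≤ c0 ∧ (∀ i, 0 ≤ c i) ∧ (∀ i, Bs i ∈ Bfam) ∧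
    g = fun x => c0 + ∑ i, c i * ind (Bs i) x

/-- `B`-measurable gamble: uniform limit of nonnegative simple `B`-measurable gambles. -/
def BMeas (Bfam : Set (Set X)) (g : X → ℝ) : Prop :=
  ∃ gs : ℕ → X → ℝ, (∀ n, 0 ≤ gs n ∧ SimpleMeas Bfam (gs n)) ∧
    TendstoUniformly gs g Filter.atTop

/-- A conditional linear prevision on `C(X)`: a coherent self-conjugate conditional
lower prevision on the full domain. -/
def CondLinPrev (P : (X → ℝ) → Set X → EReal) : Prop :=
  Coherent (domC X) P ∧ ∀ p ∈ domC X, P p.1 p.2 = -P (-p.1) p.2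

section Product

variable {X1 X2 : Type*}

/-- `A_{1→2}`. -/
def A12 (D2 : Set (X2 → ℝ)) (F1 : Set (Set X1)) : Set (X1 × X2 → ℝ) :=
  {g | ∃ f2 ∈ D2, ∃ B1 ∈ F1 ∪ {Set.univ}, g = fun p => f2 p.2 * ind B1 p.1}

/-- `A_{2→1}`. -/
def A21 (D1 : Set (X1 → ℝ)) (F2 : Set (Set X2)) : Set (X1 × X2 → ℝ) :=
  {g | ∃ f1 ∈ D1, ∃ B2 ∈ F2 ∪ {Set.univ}, g = fun p => f1 p.1 * ind B2 p.2}

/-- `D1 ⊗ D2`, relative to the families of conditioning events `F1`, `F2`. -/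
def indNatExt (D1 : Set (X1 → ℝ)) (D2 : Set (X2 → ℝ))
    (F1 : Set (Set X1)) (F2 : Set (Set X2)) : Set (X1 × X2 → ℝ) :=
  natExtSet (A12 D2 F1 ∪ A21 D1 F2)

/-- `marg_1(D)`. -/
def marg1 (D : Set (X1 × X2 → ℝ)) : Set (X1 → ℝ) :=
  {f | IsGamble f ∧ (fun p : X1 × X2 => f p.1) ∈ D}

/-- `marg_2(D)`. -/
def marg2 (D : Set (X1 × X2 → ℝ)) : Set (X2 → ℝ) :=
  {f | IsGamble f ∧ (fun p : X1 × X2 => f p.2) ∈ D}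

/-- `marg_1(D|B2)`. -/
def marg1c (D : Set (X1 × X2 → ℝ)) (B2 : Set X2) : Set (X1 → ℝ) :=
  {f | IsGamble f ∧ (fun p : X1 × X2 => f p.1 * ind B2 p.2) ∈ D}

/-- `marg_2(D|B1)`. -/
def marg2c (D : Set (X1 × X2 → ℝ)) (B1 : Set X1) : Set (X2 → ℝ) :=
  {f | IsGamble f ∧ (fun p : X1 × X2 => f p.2 * ind B1 p.1) ∈ D}

/-- Epistemic independence of a set of desirable gambles on `X1 × X2`. -/
def EpIndSDG (F1 : Set (Set X1)) (F2 : Set (Set X2)) (D : Set (X1 × X2 → ℝ)) : Prop :=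
  (∀ B2 ∈ F2, marg1c D B2 = marg1 D) ∧ (∀ B1 ∈ F1, marg2c D B1 = marg2 D)

/-- Independent product (of sets of desirable gambles). -/
def IndProductSDG (F1 : Set (Set X1)) (F2 : Set (Set X2))
    (D1 : Set (X1 → ℝ)) (D2 : Set (X2 → ℝ)) (D : Set (X1 × X2 → ℝ)) : Prop :=
  CoherentSDG D ∧ EpIndSDG F1 F2 D ∧ marg1 D = D1 ∧ marg2 D = D2

/-- The independent natural extension `lp1 ⊗ lp2` on `C(X1 × X2)`. -/
noncomputable def lpProd (C1 : Set ((X1 → ℝ) × Set X1)) (lp1 : (X1 → ℝ) → Set X1 → EReal)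
    (C2 : Set ((X2 → ℝ) × Set X2)) (lp2 : (X2 → ℝ) → Set X2 → EReal)
    (F1 : Set (Set X1)) (F2 : Set (Set X2)) :
    (X1 × X2 → ℝ) → Set (X1 × X2) → EReal :=
  lpOf (indNatExt (ElpSet C1 lp1) (ElpSet C2 lp2) F1 F2)

/-- An independent domain `C ⊆ C(X1 × X2)`. -/
def IndepDomain (F1 : Set (Set X1)) (F2 : Set (Set X2))
    (C : Set ((X1 × X2 → ℝ) × Set (X1 × X2))) : Prop :=
  (∀ (f1 : X1 → ℝ) (B1 : Set X1), IsGamble f1 → B1.Nonempty → ∀ B2 ∈ F2,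
    (((fun p : X1 × X2 => f1 p.1), B1 ×ˢ (Set.univ : Set X2)) ∈ C ↔
      ((fun p : X1 × X2 => f1 p.1), B1 ×ˢ B2) ∈ C)) ∧
  (∀ (f2 : X2 → ℝ) (B2 : Set X2), IsGamble f2 → B2.Nonempty → ∀ B1 ∈ F1,
    (((fun p : X1 × X2 => f2 p.2), (Set.univ : Set X1) ×ˢ B2) ∈ C ↔
      ((fun p : X1 × X2 => f2 p.2), B1 ×ˢ B2) ∈ C))

/-- Epistemic independence of a conditional lower prevision on a domain `C`. -/
def EpIndLP (F1 : Set (Set X1)) (F2 : Set (Set X2))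
    (C : Set ((X1 × X2 → ℝ) × Set (X1 × X2)))
    (lp : (X1 × X2 → ℝ) → Set (X1 × X2) → EReal) : Prop :=
  (∀ (f1 : X1 → ℝ) (B1 : Set X1), IsGamble f1 → B1.Nonempty →
    ((fun p : X1 × X2 => f1 p.1), B1 ×ˢ (Set.univ : Set X2)) ∈ C → ∀ B2 ∈ F2,
    lp (fun p : X1 × X2 => f1 p.1) (B1 ×ˢ (Set.univ : Set X2)) =
      lp (fun p : X1 × X2 => f1 p.1) (B1 ×ˢ B2)) ∧
  (∀ (f2 : X2 → ℝ) (B2 : Set X2), IsGamble f2 → B2.Nonempty →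
    ((fun p : X1 × X2 => f2 p.2), (Set.univ : Set X1) ×ˢ B2) ∈ C → ∀ B1 ∈ F1,
    lp (fun p : X1 × X2 => f2 p.2) ((Set.univ : Set X1) ×ˢ B2) =
      lp (fun p : X1 × X2 => f2 p.2) (B1 ×ˢ B2))

/-- Independent product of two conditional lower previsions, on the joint domain `C`. -/
def IndProductLP (F1 : Set (Set X1)) (F2 : Set (Set X2))
    (C1 : Set ((X1 → ℝ) × Set X1)) (lp1 : (X1 → ℝ) → Set X1 → EReal)
    (C2 : Set ((X2 → ℝ) × Set X2)) (lp2 : (X2 → ℝ) → Set X2 → EReal)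
    (C : Set ((X1 × X2 → ℝ) × Set (X1 × X2)))
    (lp : (X1 × X2 → ℝ) → Set (X1 × X2) → EReal) : Prop :=
  Coherent C lp ∧ EpIndLP F1 F2 C lp ∧
  (∀ p ∈ C1, lp (fun q : X1 × X2 => p.1 q.1) (p.2 ×ˢ (Set.univ : Set X2)) = lp1 p.1 p.2) ∧
  (∀ p ∈ C2, lp (fun q : X1 × X2 => p.1 q.2) ((Set.univ : Set X1) ×ˢ p.2) = lp2 p.1 p.2)

end Product

/-!
Write `Lᵢ` for the lower prevision of `E(lpᵢ)` and `μ = L₂(k)`; the claim is that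
`sup {m | f + g·k - m ∈ E(lp₁) ⊗ E(lp₂)} = L₁(f + g·μ)`.

Upper bound: by Hahn–Banach there is a linear `P ≥ L₂` with `P k = μ`. The marginal extension
`H ↦ L₁(x₁ ↦ P(H(x₁, ·)))` is superadditive, positively homogeneous and nonnegative on the
generators of the product, hence on the whole product; at `f + g·k - m` it equals `L₁(f + g·μ) - m`.

Lower bound: for simple `g = c₀ + ∑ cᵢ 1_{Bᵢ}` and small `δ > 0`, the gamble `f + g·k - m` is the
sum of the cylinder of an element of `E(lp₁)`, a positive gamble, and the nonnegative combination
`g·(k - μ + δ)` of the generators `(k - μ + δ)·1_{Bᵢ}`. Uniform approximation of a measurable `g`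
by simple ones moves the error into the positive gamble.

The second half of the theorem is the first transported along `Prod.swap`.
-/

section Gambles

variable {Y : Type*}

lemma ind_nonneg (B : Set X) (x : X) : 0 ≤ ind B x :=
  Set.indicator_nonneg (fun _ _ => zero_le_one) x

lemma ind_le_one (B : Set X) (x : X) : ind B x ≤ 1 :=
  Set.indicator_le_self' (fun _ _ => zero_le_one) x

@[simp]
lemma ind_univ (x : X) : ind (Set.univ : Set X) x = 1 := by simp [ind]

lemma isGamble_const (c : ℝ) : IsGamble (fun _ : X => c) := ⟨|c|, fun _ => le_rfl⟩

lemma isGamble_ind (B : Set X) : IsGamble (ind B) :=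
  ⟨1, fun x => abs_le.mpr ⟨by linarith [ind_nonneg B x], ind_le_one B x⟩⟩

lemma IsGamble.exists_bound_nonneg {f : X → ℝ} (hf : IsGamble f) :
    ∃ M, 0 ≤ M ∧ ∀ x, |f x| ≤ M := by
  obtain ⟨M, hM⟩ := hf
  exact ⟨max M 0, le_max_right _ _, fun x => (hM x).trans (le_max_left _ _)⟩

lemma IsGamble.add {f g : X → ℝ} (hf : IsGamble f) (hg : IsGamble g) : IsGamble (f + g) := by
  obtain ⟨M, hM⟩ := hf
  obtain ⟨N, hN⟩ := hg
  exact ⟨M + N, fun x => (abs_add_le _ _).trans (add_le_add (hM x) (hN x))⟩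

lemma IsGamble.mul {f g : X → ℝ} (hf : IsGamble f) (hg : IsGamble g) : IsGamble (f * g) := by
  obtain ⟨M, hM0, hM⟩ := hf.exists_bound_nonneg
  obtain ⟨N, hN⟩ := hg
  exact ⟨M * N, fun x => by
    rw [Pi.mul_apply, abs_mul]; exact mul_le_mul (hM x) (hN x) (abs_nonneg _) hM0⟩

lemma IsGamble.comp {f : X → ℝ} (hf : IsGamble f) (φ : Y → X) : IsGamble (f ∘ φ) := by
  obtain ⟨M, hM⟩ := hf
  exact ⟨M, fun y => hM (φ y)⟩

lemma IsGamble.add_mul_const {f g : X → ℝ} (hf : IsGamble f) (hg : IsGamble g) (c : ℝ) :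
    IsGamble fun x => f x + g x * c :=
  hf.add (hg.mul (isGamble_const c))

variable (X) in
def gambles : Submodule ℝ (X → ℝ) where
  carrier := {f | IsGamble f}
  add_mem' := IsGamble.add
  zero_mem' := isGamble_const 0
  smul_mem' c _ hf := (isGamble_const c).mul hf

lemma IsGamble.neg {f : X → ℝ} (hf : IsGamble f) : IsGamble (-f) := (gambles X).neg_mem hf

lemma IsGamble.sub {f g : X → ℝ} (hf : IsGamble f) (hg : IsGamble g) : IsGamble (f - g) :=
  (gambles X).sub_mem hf hg

lemma IsGamble.sum {ι : Type*} (s : Finset ι) {f : ι → X → ℝ} (hf : ∀ i, IsGamble (f i)) :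
    IsGamble (∑ i ∈ s, f i) :=
  (gambles X).sum_mem fun i _ => hf i

lemma mem_Gpos_of_forall_le [Nonempty X] {f : X → ℝ} (hf : IsGamble f) {ε : ℝ} (hε : 0 < ε)
    (hle : ∀ x, ε ≤ f x) : f ∈ Gpos X := by
  refine ⟨hf, fun x => hε.le.trans (hle x), fun h0 => ?_⟩
  obtain ⟨x⟩ := ‹Nonempty X›
  have := hle x
  simp only [h0, Pi.zero_apply] at this
  linarith

lemma comp_mem_Gpos {φ : Y → X} (hφ : Function.Surjective φ) {f : X → ℝ} (hf : f ∈ Gpos X) :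
    f ∘ φ ∈ Gpos Y :=
  ⟨hf.1.comp φ, fun y => hf.2.1 (φ y), fun h0 => hf.2.2 <| funext fun x => by
    obtain ⟨y, rfl⟩ := hφ x
    exact congrFun h0 y⟩

lemma SimpleMeas.isGamble {B : Set (Set X)} {s : X → ℝ} (hs : SimpleMeas B s) : IsGamble s := by
  obtain ⟨c0, n, c, Bs, -, -, -, rfl⟩ := hs
  convert (isGamble_const c0).add
    (IsGamble.sum Finset.univ fun i => (isGamble_const (c i)).mul (isGamble_ind (Bs i))) using 1
  ext x
  simp [Finset.sum_apply]

end Gambles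

section Posi

variable {Y : Type*} {A : Set (X → ℝ)}

lemma subset_posi : A ⊆ posi A := fun a ha =>
  ⟨0, fun _ => 1, fun _ => a, fun _ => one_pos, fun _ => ha, by simp⟩

lemma smul_mem_posi {c : ℝ} (hc : 0 < c) {g : X → ℝ} (hg : g ∈ posi A) : c • g ∈ posi A := by
  obtain ⟨n, l, h, hl, hmem, rfl⟩ := hg
  exact ⟨n, fun i => c * l i, h, fun i => mul_pos hc (hl i), hmem, by
    simp [Finset.smul_sum, smul_smul]⟩

lemma add_mem_posi {g₁ g₂ : X → ℝ} (h₁ : g₁ ∈ posi A) (h₂ : g₂ ∈ posi A) : g₁ + g₂ ∈ posi A := by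
  obtain ⟨n₁, l₁, f₁, hl₁, hm₁, rfl⟩ := h₁
  obtain ⟨n₂, l₂, f₂, hl₂, hm₂, rfl⟩ := h₂
  refine ⟨n₁ + 1 + n₂, Fin.append (m := n₁ + 1) (n := n₂ + 1) l₁ l₂,
    Fin.append (m := n₁ + 1) (n := n₂ + 1) f₁ f₂, ?_, ?_, ?_⟩
  · exact Fin.addCases (m := n₁ + 1) (n := n₂ + 1) (by simpa using hl₁) (by simpa using hl₂)
  · exact Fin.addCases (m := n₁ + 1) (n := n₂ + 1) (by simpa using hm₁) (by simpa using hm₂)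
  · show _ = ∑ i : Fin ((n₁ + 1) + (n₂ + 1)), Fin.append l₁ l₂ i • Fin.append f₁ f₂ i
    simp [Fin.sum_univ_add]

lemma posi_subset {S : Set (X → ℝ)} (hA : A ⊆ S) (hsmul : ∀ c : ℝ, 0 < c → ∀ g ∈ S, c • g ∈ S)
    (hadd : ∀ g₁ ∈ S, ∀ g₂ ∈ S, g₁ + g₂ ∈ S) : posi A ⊆ S := by
  rintro _ ⟨n, l, h, hl, hmem, rfl⟩
  induction n with
  | zero => simpa using hsmul _ (hl 0) _ (hA (hmem 0))
  | succ n ih =>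
    rw [Fin.sum_univ_succ]
    exact hadd _ (hsmul _ (hl 0) _ (hA (hmem 0))) _
      (ih (fun i => l i.succ) (fun i => h i.succ) (fun i => hl i.succ) fun i => hmem i.succ)

lemma add_sum_smul_mem_posi {ι : Type*} (s : Finset ι) {a : X → ℝ} (ha : a ∈ posi A)
    {c : ι → ℝ} (hc : ∀ i, 0 ≤ c i) {v : ι → X → ℝ} (hv : ∀ i, v i ∈ posi A) :
    a + ∑ i ∈ s, c i • v i ∈ posi A := by
  have : ∑ i ∈ s, c i • v i = 0 ∨ ∑ i ∈ s, c i • v i ∈ posi A := by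
    refine Finset.sum_induction _ (fun g => g = 0 ∨ g ∈ posi A) ?_ (Or.inl rfl) fun i _ => ?_
    · rintro g₁ g₂ (rfl | h₁) (rfl | h₂)
      exacts [Or.inl (add_zero 0), Or.inr (by simpa using h₂), Or.inr (by simpa using h₁),
        Or.inr (add_mem_posi h₁ h₂)]
    · rcases (hc i).eq_or_lt with h0 | hpos
      · exact Or.inl (by simp [← h0])
      · exact Or.inr (smul_mem_posi hpos (hv i))
  rcases this with h0 | hmem
  · simpa [h0] using ha
  · exact add_mem_posi ha hmem

lemma add_smul_mem_posi {a v : X → ℝ} (ha : a ∈ posi A) {c : ℝ} (hc : 0 ≤ c) (hv : v ∈ posi A) :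
    a + c • v ∈ posi A := by
  simpa using add_sum_smul_mem_posi (Finset.univ : Finset Unit) ha (fun _ => hc) fun _ => hv

lemma comp_mem_posi {B : Set (Y → ℝ)} (φ : Y → X) (hAB : ∀ a ∈ A, a ∘ φ ∈ B) {g : X → ℝ}
    (hg : g ∈ posi A) : g ∘ φ ∈ posi B :=
  posi_subset (S := {g | g ∘ φ ∈ posi B}) (fun a ha => subset_posi (hAB a ha))
    (fun _ hc _ hg => smul_mem_posi hc hg) (fun _ h₁ _ h₂ => add_mem_posi h₁ h₂) hg

lemma Gpos_subset_natExtSet : Gpos X ⊆ natExtSet A :=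
  fun _ hg => subset_posi (Or.inr hg)

lemma subset_natExtSet : A ⊆ natExtSet A :=
  fun _ hg => subset_posi (Or.inl hg)

end Posi

section LowerPrev

lemma CoherentSDG.Gpos_subset {D : Set (X → ℝ)} (hD : CoherentSDG D) : Gpos X ⊆ D :=
  fun f hf => hD.d1 f hf.1 hf.2.1 hf.2.2

lemma CoherentSDG.add_mem_of_nonneg {D : Set (X → ℝ)} (hD : CoherentSDG D) {f g : X → ℝ}
    (hf : f ∈ D) (hg : IsGamble g) (hg0 : 0 ≤ g) : f + g ∈ D := by
  rcases eq_or_ne g 0 with rfl | hne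
  · simpa using hf
  · exact hD.d3 _ hf _ (hD.d1 _ hg hg0 hne)

lemma CoherentSDG.natExtSet_subset {D A : Set (X → ℝ)} (hD : CoherentSDG D) (hA : A ⊆ D) :
    natExtSet A ⊆ D :=
  posi_subset (Set.union_subset hA hD.Gpos_subset) (fun c hc g hg => hD.d2 g hg c hc)
    (fun _ h₁ _ h₂ => hD.d3 _ h₁ _ h₂)

variable {D : Set (X → ℝ)} {h h' : X → ℝ} {m c : ℝ}

/-- `lp_D(· | X)` as a real number: a junk `sSup` unless `D` is coherent and `h` a gamble,
when it agrees with `lpOf D h Set.univ` (`CoherentSDG.lpOf_univ`). -/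
noncomputable def lowerPrev (D : Set (X → ℝ)) (h : X → ℝ) : ℝ :=
  sSup {m : ℝ | (fun x => h x - m) ∈ D}

noncomputable def upperPrev (D : Set (X → ℝ)) (h : X → ℝ) : ℝ :=
  -lowerPrev D (-h)

lemma lowerPrev_eq_of {a : ℝ}
    (hlt : ∀ m < a, (fun x => h x - m) ∈ D) (hle : ∀ m, (fun x => h x - m) ∈ D → m ≤ a) :
    lowerPrev D h = a :=
  csSup_eq_of_forall_le_of_forall_lt_exists_gt ⟨a - 1, hlt _ (by linarith)⟩ hle
    fun w hw => ⟨(w + a) / 2, hlt _ (by linarith), by linarith⟩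

lemma lpOf_univ_eq_coe {a : ℝ}
    (hlt : ∀ m < a, (fun x => h x - m) ∈ D) (hle : ∀ m, (fun x => h x - m) ∈ D → m ≤ a) :
    lpOf D h Set.univ = a := by
  have hS : {m : ℝ | (fun x => (h x - m) * ind Set.univ x) ∈ D} =
      {m : ℝ | (fun x => h x - m) ∈ D} := by
    simp only [ind_univ, mul_one]
  rw [lpOf, hS, ← lowerPrev_eq_of hlt hle, lowerPrev]
  exact (Monotone.map_csSup_of_continuousAt continuous_coe_real_ereal.continuousAt
    EReal.coe_strictMono.monotone ⟨a - 1, hlt _ (by linarith)⟩ ⟨a, hle⟩).symm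

lemma CoherentSDG.bddAbove_setOf_sub_mem (hD : CoherentSDG D) (hh : IsGamble h) :
    BddAbove {m : ℝ | (fun x => h x - m) ∈ D} := by
  obtain ⟨M, hM⟩ := hh
  refine ⟨M, fun m hm => not_lt.1 fun hlt => hD.d4 _ (fun x => ?_) hm⟩
  show h x - m ≤ 0
  linarith [(abs_le.mp (hM x)).2]

lemma CoherentSDG.le_lowerPrev (hD : CoherentSDG D) (hh : IsGamble h)
    (hm : (fun x => h x - m) ∈ D) : m ≤ lowerPrev D h :=
  le_csSup (hD.bddAbove_setOf_sub_mem hh) hm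

variable [Nonempty X]

lemma CoherentSDG.const_mem (hD : CoherentSDG D) (hc : 0 < c) : (fun _ : X => c) ∈ D :=
  hD.Gpos_subset (mem_Gpos_of_forall_le (isGamble_const c) hc fun _ => le_rfl)

lemma CoherentSDG.sub_const_mem (hD : CoherentSDG D) (hm : (fun x => h x - m) ∈ D) (hc : c < m) :
    (fun x => h x - c) ∈ D := by
  convert hD.d3 _ hm _ (hD.const_mem (sub_pos.2 hc)) using 1
  funext x
  simp only [Pi.add_apply]
  ring

lemma CoherentSDG.nonempty_setOf_sub_mem (hD : CoherentSDG D) (hh : IsGamble h) :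
    {m : ℝ | (fun x => h x - m) ∈ D}.Nonempty := by
  obtain ⟨M, hM⟩ := id hh
  refine ⟨-(M + 1), hD.Gpos_subset (mem_Gpos_of_forall_le (hh.sub (isGamble_const _)) one_pos
    fun x => ?_)⟩
  linarith [(abs_le.mp (hM x)).1]

lemma CoherentSDG.sub_mem_of_lt_lowerPrev (hD : CoherentSDG D) (hh : IsGamble h)
    (hm : m < lowerPrev D h) : (fun x => h x - m) ∈ D := by
  obtain ⟨m', hm', hlt⟩ := exists_lt_of_lt_csSup (hD.nonempty_setOf_sub_mem hh) hm
  exact hD.sub_const_mem hm' hlt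

lemma CoherentSDG.lpOf_univ (hD : CoherentSDG D) (hh : IsGamble h) :
    lpOf D h Set.univ = lowerPrev D h :=
  lpOf_univ_eq_coe (fun _ => hD.sub_mem_of_lt_lowerPrev hh) fun _ => hD.le_lowerPrev hh

lemma CoherentSDG.lowerPrev_const (hD : CoherentSDG D) : lowerPrev D (fun _ : X => c) = c :=
  lowerPrev_eq_of (fun _ hm => hD.const_mem (sub_pos.2 hm))
    fun _ hm => not_lt.1 fun hlt => hD.d4 _ (fun _ => (sub_neg.2 hlt).le) hm

lemma CoherentSDG.lowerPrev_add_const (hD : CoherentSDG D) (hh : IsGamble h) :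
    lowerPrev D (fun x => h x + c) = lowerPrev D h + c := by
  refine lowerPrev_eq_of (fun m hm => ?_) fun m hm => ?_
  · convert hD.sub_mem_of_lt_lowerPrev hh (m := m - c) (by linarith) using 2
    ring
  · have := hD.le_lowerPrev hh (m := m - c) (by convert hm using 2; ring)
    linarith

lemma CoherentSDG.lowerPrev_const_mul (hD : CoherentSDG D) (hh : IsGamble h) (hc : 0 ≤ c) :
    lowerPrev D (fun x => c * h x) = c * lowerPrev D h := by
  rcases hc.eq_or_lt with rfl | hc
  · simpa using hD.lowerPrev_const
  refine lowerPrev_eq_of (fun m hm => ?_) fun m hm => ?_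
  · convert hD.d2 _ (hD.sub_mem_of_lt_lowerPrev hh (m := m / c) (by rwa [div_lt_iff₀' hc])) c hc
      using 1
    funext x
    simp only [Pi.smul_apply, smul_eq_mul]
    field_simp
  · have := hD.le_lowerPrev hh (m := m / c) (by
      convert hD.d2 _ hm c⁻¹ (inv_pos.2 hc) using 1
      funext x
      simp only [Pi.smul_apply, smul_eq_mul]
      field_simp)
    rwa [div_le_iff₀' hc] at this

lemma CoherentSDG.lowerPrev_add_le (hD : CoherentSDG D) (hh : IsGamble h) (hh' : IsGamble h') :
    lowerPrev D h + lowerPrev D h' ≤ lowerPrev D (h + h') :=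
  add_le_of_forall_lt fun a ha b hb => hD.le_lowerPrev (hh.add hh') <| by
    convert hD.d3 _ (hD.sub_mem_of_lt_lowerPrev hh ha) _ (hD.sub_mem_of_lt_lowerPrev hh' hb) using 1
    funext x
    simp only [Pi.add_apply]
    ring

lemma CoherentSDG.lowerPrev_mono (hD : CoherentSDG D) (hh : IsGamble h) (hh' : IsGamble h')
    (hle : h ≤ h') : lowerPrev D h ≤ lowerPrev D h' :=
  le_of_forall_lt_imp_le_of_dense fun m hm => hD.le_lowerPrev hh' <| by
    convert hD.add_mem_of_nonneg (hD.sub_mem_of_lt_lowerPrev hh hm) (hh'.sub hh) (sub_nonneg.2 hle)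
      using 1
    funext x
    simp only [Pi.add_apply, Pi.sub_apply]
    ring

lemma CoherentSDG.le_lowerPrev_of_le (hD : CoherentSDG D) (hh : IsGamble h) (hle : ∀ x, c ≤ h x) :
    c ≤ lowerPrev D h := by
  simpa [hD.lowerPrev_const] using hD.lowerPrev_mono (isGamble_const c) hh hle

lemma CoherentSDG.lowerPrev_le_add_of_le (hD : CoherentSDG D) (hh : IsGamble h) (hh' : IsGamble h')
    (hle : ∀ x, h x ≤ h' x + c) : lowerPrev D h ≤ lowerPrev D h' + c := by
  rw [← hD.lowerPrev_add_const hh']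
  exact hD.lowerPrev_mono hh (hh'.add (isGamble_const c)) hle

lemma CoherentSDG.lowerPrev_nonneg (hD : CoherentSDG D) (hmem : h ∈ D) : 0 ≤ lowerPrev D h :=
  le_of_forall_lt_imp_le_of_dense fun _ hm => hD.le_lowerPrev (hD.subset_gambles h hmem)
    (hD.sub_const_mem (m := 0) (by simpa using hmem) hm)

lemma CoherentSDG.lowerPrev_le_upperPrev (hD : CoherentSDG D) (hh : IsGamble h) :
    lowerPrev D h ≤ upperPrev D h := by
  have := hD.lowerPrev_add_le hh hh.neg
  rw [add_neg_cancel, show (0 : X → ℝ) = fun _ => 0 from rfl, hD.lowerPrev_const] at this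
  rw [upperPrev]
  linarith

end LowerPrev

theorem exists_linearMap_le_sublinear_eq {E : Type*} [AddCommGroup E] [Module ℝ E] (N : E → ℝ)
    (N_hom : ∀ c : ℝ, 0 < c → ∀ x, N (c • x) = c * N x) (N_add : ∀ x y, N (x + y) ≤ N x + N y)
    (x : E) {a : ℝ} (ha : -N (-x) ≤ a) (ha' : a ≤ N x) :
    ∃ φ : E →ₗ[ℝ] ℝ, (∀ y, φ y ≤ N y) ∧ φ x = a := by
  have N_zero : N 0 = 0 := by
    have := N_hom 2 two_pos 0
    rw [smul_zero] at this
    linarith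
  have H : ∀ c : ℝ, c • x = 0 → (RingHom.id ℝ) c • a = 0 := by
    intro c hc
    rcases eq_or_ne c 0 with rfl | hc0
    · simp
    obtain rfl : x = 0 := (smul_eq_zero.1 hc).resolve_left hc0
    rw [neg_zero, N_zero] at ha
    rw [N_zero] at ha'
    rw [le_antisymm ha' (by linarith), smul_zero]
  set f := LinearPMap.mkSpanSingleton' x a H
  have hdom : f.domain = ℝ ∙ x := LinearPMap.domain_mkSpanSingleton x a H
  have hfN : ∀ y : f.domain, f y ≤ N y := by
    rintro ⟨y, hy⟩
    obtain ⟨c, rfl⟩ := Submodule.mem_span_singleton.1 (hdom ▸ hy)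
    rw [LinearPMap.mkSpanSingleton'_apply x a H c hy, RingHom.id_apply, smul_eq_mul]
    change c * a ≤ N (c • x)
    rcases lt_trichotomy c 0 with hc | rfl | hc
    · rw [show c • x = (-c) • -x by rw [smul_neg, neg_smul, neg_neg], N_hom _ (neg_pos.2 hc)]
      nlinarith
    · simp [N_zero]
    · rw [N_hom _ hc]
      nlinarith
  obtain ⟨φ, hφf, hφN⟩ := exists_extension_of_le_sublinear f N N_hom N_add hfN
  have hx : x ∈ f.domain := hdom ▸ Submodule.mem_span_singleton_self x
  exact ⟨φ, hφN, (hφf ⟨x, hx⟩).trans (LinearPMap.mkSpanSingleton'_apply_self x a H hx)⟩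

section CredalSet

def credalSet (D : Set (X → ℝ)) : Set ((X → ℝ) →ₗ[ℝ] ℝ) :=
  {P | ∀ h, IsGamble h → lowerPrev D h ≤ P h}

variable {D : Set (X → ℝ)} {P : (X → ℝ) →ₗ[ℝ] ℝ} {h : X → ℝ}

lemma apply_le_of_mem_credalSet (hP : P ∈ credalSet D) (hh : IsGamble h) :
    P h ≤ upperPrev D h := by
  have := hP _ hh.neg
  rw [map_neg] at this
  rw [upperPrev]
  linarith

variable [Nonempty X]

lemma CoherentSDG.exists_mem_credalSet_eq (hD : CoherentSDG D) {k : X → ℝ} (hk : IsGamble k) :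
    ∃ P ∈ credalSet D, P k = lowerPrev D k := by
  obtain ⟨φ, hφN, hφk⟩ := exists_linearMap_le_sublinear_eq (fun h : gambles X => upperPrev D h)
    (fun c hc h => by
      simp only [upperPrev, Submodule.coe_smul, ← smul_neg, mul_neg, neg_inj]
      exact hD.lowerPrev_const_mul h.2.neg hc.le)
    (fun h h' => by
      have := hD.lowerPrev_add_le h.2.neg h'.2.neg
      simp only [upperPrev, Submodule.coe_add, neg_add]
      linarith)
    ⟨k, hk⟩ (a := lowerPrev D k) (by simp [upperPrev]) (hD.lowerPrev_le_upperPrev hk)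
  obtain ⟨P, hP⟩ := LinearMap.exists_extend φ
  have hPφ : ∀ h (hh : IsGamble h), P h = φ ⟨h, hh⟩ := fun h hh => by rw [← hP]; rfl
  refine ⟨P, fun h hh => ?_, (hPφ k hk).trans hφk⟩
  have := hφN (-⟨h, hh⟩)
  simp only [upperPrev, map_neg, Submodule.coe_neg, neg_neg] at this
  rw [hPφ h hh]
  linarith

lemma CoherentSDG.abs_apply_le_of_mem_credalSet (hD : CoherentSDG D) (hP : P ∈ credalSet D)
    (hh : IsGamble h) {M : ℝ} (hM : ∀ x, |h x| ≤ M) : |P h| ≤ M := by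
  have hlow := hD.le_lowerPrev_of_le hh fun x => (abs_le.1 (hM x)).1
  have hup := hD.le_lowerPrev_of_le hh.neg fun x => neg_le_neg (abs_le.1 (hM x)).2
  refine abs_le.2 ⟨hlow.trans (hP h hh), (apply_le_of_mem_credalSet hP hh).trans ?_⟩
  rw [upperPrev]
  linarith

lemma CoherentSDG.apply_const_of_mem_credalSet (hD : CoherentSDG D) (hP : P ∈ credalSet D)
    (c : ℝ) : P (fun _ => c) = c := by
  have hlow := hP _ (isGamble_const c)
  have hup := apply_le_of_mem_credalSet hP (isGamble_const c)
  rw [hD.lowerPrev_const] at hlow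
  rw [upperPrev, show -(fun _ : X => c) = fun _ => -c from rfl, hD.lowerPrev_const, neg_neg] at hup
  exact le_antisymm hup hlow

lemma CoherentSDG.apply_nonneg_of_mem_credalSet (hD : CoherentSDG D)
    (hP : P ∈ credalSet D) (hh : IsGamble h) (h0 : 0 ≤ h) : 0 ≤ P h :=
  (hD.le_lowerPrev_of_le hh h0).trans (hP h hh)

end CredalSet

section NaturalExtension

variable {C : Set ((X → ℝ) × Set X)} {lp : (X → ℝ) → Set X → EReal}

lemma Alp_subset {D : Set (X → ℝ)} (hD : CoherentSDG D)
    (hlpD : ∀ p ∈ C, lp p.1 p.2 = lpOf D p.1 p.2) : Alp C lp ⊆ D := by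
  rintro _ ⟨p, hp, m, hm, rfl⟩
  rw [hlpD p hp, lpOf] at hm
  obtain ⟨_, ⟨μ, hμ, rfl⟩, hmμ⟩ := lt_sSup_iff.1 hm
  refine Set.mem_of_eq_of_mem ?_ (hD.add_mem_of_nonneg hμ
    ((isGamble_const (μ - m)).mul (isGamble_ind p.2))
    fun x => mul_nonneg (sub_nonneg.2 (EReal.coe_lt_coe_iff.1 hmμ).le) (ind_nonneg p.2 x))
  ext x
  simp only [Pi.add_apply, Pi.mul_apply]
  ring

theorem Coherent.coherentSDG_ElpSet (hlp : Coherent C lp) : CoherentSDG (ElpSet C lp) := by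
  obtain ⟨D, hD, hlpD⟩ := hlp
  have hsub : ElpSet C lp ⊆ D := hD.natExtSet_subset (Alp_subset hD hlpD)
  exact ⟨fun f hf => hD.subset_gambles f (hsub hf),
    fun f hf h0 hne => Gpos_subset_natExtSet ⟨hf, h0, hne⟩, fun f hf c hc => smul_mem_posi hc hf,
    fun f hf g hg => add_mem_posi hf hg, fun f hf hmem => hD.d4 f hf (hsub hmem)⟩

lemma Coherent.natExtLP_univ [Nonempty X] (hlp : Coherent C lp) {h : X → ℝ} (hh : IsGamble h) :
    natExtLP C lp h Set.univ = lowerPrev (ElpSet C lp) h :=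
  hlp.coherentSDG_ElpSet.lpOf_univ hh

end NaturalExtension


section MarginalExtension

variable {X1 X2 : Type*} [Nonempty X2] {D1 : Set (X1 → ℝ)} {D2 : Set (X2 → ℝ)}
  {P : (X2 → ℝ) →ₗ[ℝ] ℝ} {H H' : X1 × X2 → ℝ}

noncomputable def marginalExt (D1 : Set (X1 → ℝ)) (P : (X2 → ℝ) →ₗ[ℝ] ℝ) (H : X1 × X2 → ℝ) : ℝ :=
  lowerPrev D1 fun x1 => P (Function.curry H x1)

lemma CoherentSDG.isGamble_apply_curry (hD2 : CoherentSDG D2) (hP : P ∈ credalSet D2)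
    (hH : IsGamble H) : IsGamble fun x1 => P (Function.curry H x1) := by
  obtain ⟨M, hM⟩ := id hH
  exact ⟨M, fun x1 => hD2.abs_apply_le_of_mem_credalSet hP (hH.comp (Prod.mk x1)) fun _ => hM _⟩

variable [Nonempty X1]

lemma marginalExt_smul (hD1 : CoherentSDG D1) (hD2 : CoherentSDG D2) (hP : P ∈ credalSet D2)
    {c : ℝ} (hc : 0 ≤ c) (hH : IsGamble H) :
    marginalExt D1 P (c • H) = c * marginalExt D1 P H := by
  rw [marginalExt, marginalExt, ← hD1.lowerPrev_const_mul (hD2.isGamble_apply_curry hP hH) hc]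
  exact congrArg (lowerPrev D1) (funext fun x1 => map_smul P c (Function.curry H x1))

lemma marginalExt_add_le (hD1 : CoherentSDG D1) (hD2 : CoherentSDG D2) (hP : P ∈ credalSet D2)
    (hH : IsGamble H) (hH' : IsGamble H') :
    marginalExt D1 P H + marginalExt D1 P H' ≤ marginalExt D1 P (H + H') := by
  refine (hD1.lowerPrev_add_le (hD2.isGamble_apply_curry hP hH)
    (hD2.isGamble_apply_curry hP hH')).trans_eq (congrArg (lowerPrev D1) (funext fun x1 => ?_))
  exact (map_add P (Function.curry H x1) (Function.curry H' x1)).symm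

lemma marginalExt_nonneg_of_mem_indNatExt (hD1 : CoherentSDG D1) (hD2 : CoherentSDG D2)
    (hP : P ∈ credalSet D2) {F1 : Set (Set X1)} {F2 : Set (Set X2)}
    (hH : H ∈ indNatExt D1 D2 F1 F2) : 0 ≤ marginalExt D1 P H := by
  refine (posi_subset (S := {H | IsGamble H ∧ 0 ≤ marginalExt D1 P H}) ?_
    (fun c hc H hH => ⟨(gambles _).smul_mem c hH.1, ?_⟩)
    (fun H hH H' hH' => ⟨hH.1.add hH'.1, ?_⟩) hH).2
  · rintro _ ((⟨f2, hf2, B1, -, rfl⟩ | ⟨f1, hf1, B2, -, rfl⟩) | hH)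
    · have hf2g := hD2.subset_gambles f2 hf2
      refine ⟨(hf2g.comp Prod.snd).mul ((isGamble_ind B1).comp Prod.fst), ?_⟩
      refine hD1.le_lowerPrev_of_le (hD2.isGamble_apply_curry hP ?_) fun x1 => ?_
      · exact (hf2g.comp Prod.snd).mul ((isGamble_ind B1).comp Prod.fst)
      · rw [show Function.curry (fun p => f2 p.2 * ind B1 p.1) x1 = ind B1 x1 • f2 from
          funext fun _ => mul_comm _ _, map_smul, smul_eq_mul]
        exact mul_nonneg (ind_nonneg B1 x1) ((hD2.lowerPrev_nonneg hf2).trans (hP f2 hf2g))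
    -- `f1` may change sign: linearity of `P` is what lets `P (1_{B2}) ≥ 0` factor out.
    · have hf1g := hD1.subset_gambles f1 hf1
      refine ⟨(hf1g.comp Prod.fst).mul ((isGamble_ind B2).comp Prod.snd), ?_⟩
      have hPB2 : 0 ≤ P (ind B2) :=
        hD2.apply_nonneg_of_mem_credalSet hP (isGamble_ind B2) (ind_nonneg B2)
      have : (fun x1 => P (Function.curry (fun p => f1 p.1 * ind B2 p.2) x1)) =
          fun x1 => P (ind B2) * f1 x1 := funext fun x1 => by
        rw [show Function.curry (fun p => f1 p.1 * ind B2 p.2) x1 = f1 x1 • ind B2 from rfl,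
          map_smul, smul_eq_mul, mul_comm]
      rw [marginalExt, this, hD1.lowerPrev_const_mul hf1g hPB2]
      exact mul_nonneg hPB2 (hD1.lowerPrev_nonneg hf1)
    · exact ⟨hH.1, hD1.le_lowerPrev_of_le (hD2.isGamble_apply_curry hP hH.1) fun x1 =>
        hD2.apply_nonneg_of_mem_credalSet hP (hH.1.comp (Prod.mk x1)) fun x2 => hH.2.1 (x1, x2)⟩
  · rw [marginalExt_smul hD1 hD2 hP hc.le hH.1]
    exact mul_nonneg hc.le hH.2
  · exact (add_nonneg hH.2 hH'.2).trans (marginalExt_add_le hD1 hD2 hP hH.1 hH'.1)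

lemma marginalExt_cylinder_sub_const (hD1 : CoherentSDG D1) (hD2 : CoherentSDG D2)
    (hP : P ∈ credalSet D2) {f g : X1 → ℝ} {k : X2 → ℝ} (hf : IsGamble f) (hg : IsGamble g)
    (m : ℝ) :
    marginalExt D1 P (fun p => f p.1 + g p.1 * k p.2 - m) =
      lowerPrev D1 (fun x1 => f x1 + g x1 * P k) - m := by
  have : (fun x1 => P (Function.curry (fun p => f p.1 + g p.1 * k p.2 - m) x1)) =
      fun x1 => (f x1 + g x1 * P k) + -m := funext fun x1 => by
    have hsplit : Function.curry (fun p => f p.1 + g p.1 * k p.2 - m) x1 =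
        (fun _ => f x1 - m) + g x1 • k := by
      ext x2
      simp only [Function.curry_apply, Pi.add_apply, Pi.smul_apply, smul_eq_mul]
      ring
    rw [hsplit, map_add, map_smul, hD2.apply_const_of_mem_credalSet hP, smul_eq_mul]
    ring
  rw [marginalExt, this, sub_eq_add_neg]
  exact hD1.lowerPrev_add_const (hf.add_mul_const hg _)

theorem le_lowerPrev_of_mem_indNatExt (hD1 : CoherentSDG D1) (hD2 : CoherentSDG D2)
    {F1 : Set (Set X1)} {F2 : Set (Set X2)} {f g : X1 → ℝ} {k : X2 → ℝ} (hf : IsGamble f)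
    (hg : IsGamble g) (hk : IsGamble k) {m : ℝ}
    (hm : (fun p => f p.1 + g p.1 * k p.2 - m) ∈ indNatExt D1 D2 F1 F2) :
    m ≤ lowerPrev D1 (fun x1 => f x1 + g x1 * lowerPrev D2 k) := by
  obtain ⟨P, hP, hPk⟩ := hD2.exists_mem_credalSet_eq hk
  have := marginalExt_nonneg_of_mem_indNatExt hD1 hD2 hP hm
  rw [marginalExt_cylinder_sub_const hD1 hD2 hP hf hg, hPk] at this
  linarith

end MarginalExtension

section IndependentNaturalExtension

variable {X1 X2 : Type*} {D1 : Set (X1 → ℝ)} {D2 : Set (X2 → ℝ)} {F1 : Set (Set X1)}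
  {F2 : Set (Set X2)}

lemma cylinder_mem_indNatExt {f1 : X1 → ℝ} (hf1 : f1 ∈ D1) :
    (fun p : X1 × X2 => f1 p.1) ∈ indNatExt D1 D2 F1 F2 :=
  subset_natExtSet (Or.inr ⟨f1, hf1, Set.univ, Or.inr rfl, by simp⟩)

lemma add_simpleMeas_mul_mem_indNatExt {a : X1 × X2 → ℝ} (ha : a ∈ indNatExt D1 D2 F1 F2)
    {s : X1 → ℝ} (hs : SimpleMeas F1 s) {f2 : X2 → ℝ} (hf2 : f2 ∈ D2) :
    (fun p => a p + s p.1 * f2 p.2) ∈ indNatExt D1 D2 F1 F2 := by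
  obtain ⟨c0, n, c, Bs, hc0, hc, hBs, rfl⟩ := hs
  have hgen : ∀ B ∈ F1 ∪ {Set.univ},
      (fun p : X1 × X2 => f2 p.2 * ind B p.1) ∈ indNatExt D1 D2 F1 F2 := fun B hB => subset_natExtSet (Or.inl ⟨f2, hf2, B, hB, rfl⟩)
  refine Set.mem_of_eq_of_mem ?_ (add_sum_smul_mem_posi Finset.univ
    (add_smul_mem_posi ha hc0 (hgen _ (Or.inr rfl))) hc fun i => hgen (Bs i) (Or.inl (hBs i)))
  ext p
  simp only [Pi.add_apply, Pi.smul_apply, smul_eq_mul, Finset.sum_apply, ind_univ, mul_one]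
  rw [add_assoc, add_mul, Finset.sum_mul]
  exact congrArg _ (congrArg _ (Finset.sum_congr rfl fun i _ => by ring))

lemma comp_swap_mem_indNatExt {H : X2 × X1 → ℝ} (hH : H ∈ indNatExt D2 D1 F2 F1) :
    H ∘ Prod.swap ∈ indNatExt D1 D2 F1 F2 := by
  refine comp_mem_posi Prod.swap ?_ hH
  rintro _ ((⟨f1, hf1, B2, hB2, rfl⟩ | ⟨f2, hf2, B1, hB1, rfl⟩) | hG)
  exacts [Or.inl (Or.inr ⟨f1, hf1, B2, hB2, rfl⟩), Or.inl (Or.inl ⟨f2, hf2, B1, hB1, rfl⟩),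
    Or.inr (comp_mem_Gpos Prod.swap_surjective hG)]

variable [Nonempty X1] [Nonempty X2]

lemma mem_indNatExt_of_lt_of_simpleMeas (hD1 : CoherentSDG D1) (hD2 : CoherentSDG D2)
    {f s : X1 → ℝ} {k : X2 → ℝ} (hf : IsGamble f) (hs : SimpleMeas F1 s) (hk : IsGamble k) {m : ℝ}
    (hm : m < lowerPrev D1 (fun x1 => f x1 + s x1 * lowerPrev D2 k)) :
    (fun p => f p.1 + s p.1 * k p.2 - m) ∈ indNatExt D1 D2 F1 F2 := by
  set μ := lowerPrev D2 k
  set ε := (lowerPrev D1 (fun x1 => f x1 + s x1 * μ) - m) / 2 with hε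
  have hε0 : 0 < ε := by linarith
  obtain ⟨M, hM0, hM⟩ := hs.isGamble.exists_bound_nonneg
  set δ := ε / (2 * (M + 1))
  have hδ0 : 0 < δ := by positivity
  have hδM : δ * M ≤ ε / 2 := by
    rw [div_mul_eq_mul_div, div_le_div_iff₀ (by positivity) two_pos]
    nlinarith
  have h1 : (fun x1 => f x1 + s x1 * μ - (m + ε)) ∈ D1 :=
    hD1.sub_mem_of_lt_lowerPrev (hf.add_mul_const hs.isGamble μ) (by linarith)
  have h2 : (fun p : X1 × X2 => ε - δ * s p.1) ∈ Gpos (X1 × X2) := by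
    refine mem_Gpos_of_forall_le ((isGamble_const ε).sub (((isGamble_const δ).mul hs.isGamble).comp
      Prod.fst)) (half_pos hε0) fun p => ?_
    nlinarith [(abs_le.1 (hM p.1)).2]
  have h3 : (fun x2 => k x2 - (μ - δ)) ∈ D2 := hD2.sub_mem_of_lt_lowerPrev hk (by linarith)
  -- `f + s·k - m = (f + s·μ - (m + ε)) + (ε - δ·s) + s·(k - (μ - δ))`
  refine Set.mem_of_eq_of_mem ?_ (add_simpleMeas_mul_mem_indNatExt
    (add_mem_posi (cylinder_mem_indNatExt h1) (Gpos_subset_natExtSet h2)) hs h3)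
  ext p
  simp only [Pi.add_apply]
  ring

theorem mem_indNatExt_of_lt_lowerPrev (hD1 : CoherentSDG D1) (hD2 : CoherentSDG D2)
    {f g : X1 → ℝ} {k : X2 → ℝ} (hf : IsGamble f) (hg : IsGamble g) (hk : IsGamble k)
    (hgF : BMeas F1 g) {m : ℝ} (hm : m < lowerPrev D1 (fun x1 => f x1 + g x1 * lowerPrev D2 k)) :
    (fun p => f p.1 + g p.1 * k p.2 - m) ∈ indNatExt D1 D2 F1 F2 := by
  obtain ⟨gs, hgs, hconv⟩ := hgF
  set μ := lowerPrev D2 k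
  set ε := (lowerPrev D1 (fun x1 => f x1 + g x1 * μ) - m) / 2 with hε
  have hε0 : 0 < ε := by linarith
  obtain ⟨M, hM0, hM⟩ := hk.exists_bound_nonneg
  set η := ε / (M + |μ| + 1)
  have hη0 : 0 < η := by positivity
  have hηε : η * (M + |μ|) < ε := by
    rw [div_mul_eq_mul_div, div_lt_iff₀ (by positivity)]
    nlinarith
  obtain ⟨N, hN⟩ := (Metric.tendstoUniformly_iff.1 hconv η hη0).exists
  have hclose : ∀ x, |g x - gs N x| ≤ η := fun x => by
    simpa [Real.dist_eq] using (hN x).le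
  have hsG := (hgs N).2.isGamble
  have happrox : lowerPrev D1 (fun x1 => f x1 + g x1 * μ) ≤
      lowerPrev D1 (fun x1 => f x1 + gs N x1 * μ) + η * |μ| :=
    hD1.lowerPrev_le_add_of_le (hf.add_mul_const hg μ)
      (hf.add_mul_const hsG μ) fun x => by
        have := (le_abs_self _).trans ((abs_mul (g x - gs N x) μ).trans_le
          (mul_le_mul_of_nonneg_right (hclose x) (abs_nonneg μ)))
        linarith
  have h1 := mem_indNatExt_of_lt_of_simpleMeas (F2 := F2) hD1 hD2 hf (hgs N).2 hk (m := m + ε)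
    (by nlinarith [abs_nonneg μ])
  have h2 : (fun p : X1 × X2 => (g p.1 - gs N p.1) * k p.2 + ε) ∈ Gpos (X1 × X2) := by
    refine mem_Gpos_of_forall_le ((((hg.sub hsG).comp Prod.fst).mul (hk.comp Prod.snd)).add
      (isGamble_const ε)) (sub_pos.2 (show η * M < ε by nlinarith [abs_nonneg μ])) fun p => ?_
    have := neg_abs_le ((g p.1 - gs N p.1) * k p.2)
    rw [abs_mul] at this
    nlinarith [mul_le_mul (hclose p.1) (hM p.2) (abs_nonneg _) hη0.le]
  -- `f + g·k - m = (f + s·k - (m + ε)) + ((g - s)·k + ε)` with `s = gs N`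
  refine Set.mem_of_eq_of_mem ?_ (add_mem_posi h1 (Gpos_subset_natExtSet h2))
  ext p
  simp only [Pi.add_apply]
  ring

theorem lpOf_indNatExt_eq (hD1 : CoherentSDG D1) (hD2 : CoherentSDG D2) {f g : X1 → ℝ}
    {k : X2 → ℝ} (hf : IsGamble f) (hg : IsGamble g) (hk : IsGamble k) (hgF : BMeas F1 g) :
    lpOf (indNatExt D1 D2 F1 F2) (fun p => f p.1 + g p.1 * k p.2) Set.univ =
      lowerPrev D1 (fun x1 => f x1 + g x1 * lowerPrev D2 k) :=
  lpOf_univ_eq_coe (fun _ hm => mem_indNatExt_of_lt_lowerPrev hD1 hD2 hf hg hk hgF hm)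
    fun _ hm => le_lowerPrev_of_mem_indNatExt hD1 hD2 hf hg hk hm

theorem lpOf_indNatExt_swap_eq (hD1 : CoherentSDG D1) (hD2 : CoherentSDG D2) {f g : X2 → ℝ}
    {k : X1 → ℝ} (hf : IsGamble f) (hg : IsGamble g) (hk : IsGamble k) (hgF : BMeas F2 g) :
    lpOf (indNatExt D1 D2 F1 F2) (fun p => f p.2 + g p.2 * k p.1) Set.univ =
      lowerPrev D2 (fun x2 => f x2 + g x2 * lowerPrev D1 k) :=
  lpOf_univ_eq_coe
    (fun _ hm => comp_swap_mem_indNatExt (mem_indNatExt_of_lt_lowerPrev hD2 hD1 hf hg hk hgF hm))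
    fun _ hm => le_lowerPrev_of_mem_indNatExt hD2 hD1 hf hg hk (comp_swap_mem_indNatExt hm)

end IndependentNaturalExtension

theorem stmt14_general {X1 X2 : Type*} [Nonempty X1] [Nonempty X2]
    (C1 : Set ((X1 → ℝ) × Set X1))
    (lp1 : (X1 → ℝ) → Set X1 → EReal) (hlp1 : Coherent C1 lp1)
    (C2 : Set ((X2 → ℝ) × Set X2))
    (lp2 : (X2 → ℝ) → Set X2 → EReal) (hlp2 : Coherent C2 lp2)
    (F1 : Set (Set X1)) (F2 : Set (Set X2)) :
    (∀ (f g : X1 → ℝ) (k : X2 → ℝ), IsGamble f → IsGamble k → IsGamble g → 0 ≤ g →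
      BMeas F1 g →
      lpProd C1 lp1 C2 lp2 F1 F2 (fun p => f p.1 + g p.1 * k p.2) Set.univ =
        natExtLP C1 lp1
          (fun x1 => f x1 + g x1 * (natExtLP C2 lp2 k Set.univ).toReal) Set.univ) ∧
    (∀ (f g : X2 → ℝ) (k : X1 → ℝ), IsGamble f → IsGamble k → IsGamble g → 0 ≤ g →
      BMeas F2 g →
      lpProd C1 lp1 C2 lp2 F1 F2 (fun p => f p.2 + g p.2 * k p.1) Set.univ =
        natExtLP C2 lp2
          (fun x2 => f x2 + g x2 * (natExtLP C1 lp1 k Set.univ).toReal) Set.univ) := by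
  have hE1 := hlp1.coherentSDG_ElpSet
  have hE2 := hlp2.coherentSDG_ElpSet
  refine ⟨fun f g k hf hk hg _ hgF => ?_, fun f g k hf hk hg _ hgF => ?_⟩
  · rw [hlp2.natExtLP_univ hk, EReal.toReal_coe,
      hlp1.natExtLP_univ (hf.add_mul_const hg _)]
    exact lpOf_indNatExt_eq hE1 hE2 hf hg hk hgF
  · rw [hlp1.natExtLP_univ hk, EReal.toReal_coe,
      hlp2.natExtLP_univ (hf.add_mul_const hg _)]
    exact lpOf_indNatExt_swap_eq hE1 hE2 hf hg hk hgF

/-- Theorem 3: combined factorisation/additivity property of the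
independent natural extension, for measurable nonnegative `g`. -/
theorem stmt14 {X1 X2 : Type*} [Nonempty X1] [Nonempty X2]
    (C1 : Set ((X1 → ℝ) × Set X1)) (hC1 : C1 ⊆ domC X1)
    (lp1 : (X1 → ℝ) → Set X1 → EReal) (hlp1 : Coherent C1 lp1)
    (C2 : Set ((X2 → ℝ) × Set X2)) (hC2 : C2 ⊆ domC X2)
    (lp2 : (X2 → ℝ) → Set X2 → EReal) (hlp2 : Coherent C2 lp2)
    (F1 : Set (Set X1)) (F2 : Set (Set X2))
    (hF1 : ∀ A ∈ F1, A.Nonempty) (hF2 : ∀ A ∈ F2, A.Nonempty) :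
    (∀ (f g : X1 → ℝ) (k : X2 → ℝ), IsGamble f → IsGamble k → IsGamble g → 0 ≤ g →
      BMeas F1 g →
      lpProd C1 lp1 C2 lp2 F1 F2 (fun p => f p.1 + g p.1 * k p.2) Set.univ =
        natExtLP C1 lp1
          (fun x1 => f x1 + g x1 * (natExtLP C2 lp2 k Set.univ).toReal) Set.univ) ∧
    (∀ (f g : X2 → ℝ) (k : X1 → ℝ), IsGamble f → IsGamble k → IsGamble g → 0 ≤ g →
      BMeas F2 g →
      lpProd C1 lp1 C2 lp2 F1 F2 (fun p => f p.2 + g p.2 * k p.1) Set.univ =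
        natExtLP C2 lp2
          (fun x2 => f x2 + g x2 * (natExtLP C1 lp1 k Set.univ).toReal) Set.univ) :=
  stmt14_general C1 lp1 hlp1 C2 lp2 hlp2 F1 F2

end IPaper
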